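/- arXiv:1912.11648 — 3 statements merged into one kernel-verified Lean document; each statement's English description precedes it below -/
import Mathlib

section
/- Let f satisfy (H1) and assume lim_{s→∞} f(s) = +∞. Then the following two conditions are equivalent: (H2) there exists θ₀ ∈ (0,1) such that ∫₀^s (f(r) − f(0⁺)) dr ≤ θ₀·(f(s) − f(0⁺))·s for all s ≥ 0; (H2') there exists θ₁ ∈ (0,1) such that F_*(s) ≥ θ₁·s·f⁻¹(s) for all s ≥ 0. -/
open MeasureTheory Metric Real Set Filter

noncomputable section

lemma young_step (f finv : ℝ → ℝ) (hf : Monotone f) (hfi : Monotone finv)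
    (hleft : ∀ s ≥ (0:ℝ), finv (f s) = s) {a b : ℝ} (ha : 0 ≤ a) (hab : a ≤ b) :
    |((∫ r in (0:ℝ)..b, f r) + (∫ r in (0:ℝ)..(f b), finv r) - b * f b)
      - ((∫ r in (0:ℝ)..a, f r) + (∫ r in (0:ℝ)..(f a), finv r) - a * f a)|
      ≤ (b - a) * (f b - f a) := by
  have hb : 0 ≤ b := ha.trans hab
  have hfab : f a ≤ f b := hf hab
  have h1 : (∫ r in (0:ℝ)..b, f r) - (∫ r in (0:ℝ)..a, f r) = ∫ r in a..b, f r :=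
    intervalIntegral.integral_interval_sub_left hf.intervalIntegrable hf.intervalIntegrable
  have h2 : (∫ r in (0:ℝ)..(f b), finv r) - (∫ r in (0:ℝ)..(f a), finv r)
      = ∫ r in (f a)..(f b), finv r :=
    intervalIntegral.integral_interval_sub_left hfi.intervalIntegrable hfi.intervalIntegrable
  have hI1l : (b - a) * f a ≤ ∫ r in a..b, f r := by
    have := intervalIntegral.integral_mono_on hab (intervalIntegrable_const (c := f a) (μ := volume))
      hf.intervalIntegrable (fun x hx => hf hx.1)
    simpa [smul_eq_mul] using this
  have hI1u : (∫ r in a..b, f r) ≤ (b - a) * f b := by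
    have := intervalIntegral.integral_mono_on hab hf.intervalIntegrable
      (intervalIntegrable_const (c := f b) (μ := volume)) (fun x hx => hf hx.2)
    simpa [smul_eq_mul] using this
  have hI2l : (f b - f a) * a ≤ ∫ r in (f a)..(f b), finv r := by
    have := intervalIntegral.integral_mono_on hfab (intervalIntegrable_const (c := a) (μ := volume))
      hfi.intervalIntegrable (fun x hx => by
        have h := hfi hx.1; rwa [hleft a ha] at h)
    simpa [smul_eq_mul] using this
  have hI2u : (∫ r in (f a)..(f b), finv r) ≤ (f b - f a) * b := by
    have := intervalIntegral.integral_mono_on hfab hfi.intervalIntegrable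
      (intervalIntegrable_const (c := b) (μ := volume)) (fun x hx => by
        have h := hfi hx.2; rwa [hleft b hb] at h)
    simpa [smul_eq_mul] using this
  rw [abs_le]
  constructor <;> nlinarith [h1, h2, hI1l, hI1u, hI2l, hI2u]

lemma young_eq (f finv : ℝ → ℝ) (hf : Monotone f) (hfi : Monotone finv)
    (hf00 : f 0 = 0)
    (hleft : ∀ s ≥ (0:ℝ), finv (f s) = s) (s : ℝ) (hs : 0 ≤ s) :
    (∫ r in (0:ℝ)..(f s), finv r) = s * f s - ∫ r in (0:ℝ)..s, f r := by
  set Φ : ℝ → ℝ := fun a =>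
    (∫ r in (0:ℝ)..a, f r) + (∫ r in (0:ℝ)..(f a), finv r) - a * f a with hΦ
  have hfs0 : 0 ≤ f s := hf00 ▸ hf hs
  have key : ∀ n : ℕ, 1 ≤ n → |Φ s| ≤ s * f s / n := by
    intro n hn
    have hn0 : (0:ℝ) < n := by exact_mod_cast hn
    have tele : Φ s = ∑ i ∈ Finset.range n, (Φ (((i:ℝ)+1) * s / n) - Φ ((i:ℝ) * s / n)) := by
      have h := Finset.sum_range_sub (fun i : ℕ => Φ ((i:ℝ) * s / n)) n
      push_cast at h
      rw [mul_div_cancel_left₀ _ (ne_of_gt hn0)] at h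
      simp only [zero_mul, zero_div] at h
      have hΦ0 : Φ 0 = 0 := by simp [hΦ, hf00]
      rw [hΦ0, sub_zero] at h
      exact h.symm
    calc |Φ s| ≤ ∑ i ∈ Finset.range n, |Φ (((i:ℝ)+1) * s / n) - Φ ((i:ℝ) * s / n)| := by
          rw [tele]; exact Finset.abs_sum_le_sum_abs _ _
      _ ≤ ∑ i ∈ Finset.range n, (s / n) * (f (((i:ℝ)+1) * s / n) - f ((i:ℝ) * s / n)) := by
          refine Finset.sum_le_sum fun i _ => ?_
          have ha : (0:ℝ) ≤ (i:ℝ) * s / n := by positivity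
          have hab : (i:ℝ) * s / n ≤ ((i:ℝ)+1) * s / n := by
            have h1 : (i:ℝ) * s ≤ ((i:ℝ)+1) * s := by nlinarith
            exact div_le_div_of_nonneg_right h1 hn0.le
          have step := young_step f finv hf hfi hleft ha hab
          have hba : ((i:ℝ)+1) * s / n - (i:ℝ) * s / n = s / n := by ring
          calc |Φ (((i:ℝ)+1) * s / n) - Φ ((i:ℝ) * s / n)|
              ≤ (((i:ℝ)+1) * s / n - (i:ℝ) * s / n)
                * (f (((i:ℝ)+1) * s / n) - f ((i:ℝ) * s / n)) := step
            _ = (s / n) * (f (((i:ℝ)+1) * s / n) - f ((i:ℝ) * s / n)) := by rw [hba]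
      _ = (s / n) * (f s - f 0) := by
          rw [← Finset.mul_sum]
          congr 1
          have h := Finset.sum_range_sub (fun i : ℕ => f ((i:ℝ) * s / n)) n
          push_cast at h
          rw [mul_div_cancel_left₀ _ (ne_of_gt hn0)] at h
          simp only [zero_mul, zero_div] at h
          exact h
      _ = s * f s / n := by rw [hf00]; ring
  have habs : |Φ s| ≤ 0 := by
    by_contra hc
    push_neg at hc
    obtain ⟨n, hn⟩ := exists_nat_gt (s * f s / |Φ s|)
    have hge : (0:ℝ) ≤ s * f s / |Φ s| := by positivity
    have hn0 : (0:ℝ) < n := lt_of_le_of_lt hge hn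
    have hn1 : 1 ≤ n := Nat.one_le_iff_ne_zero.mpr (fun h => by simp [h] at hn0)
    have hlt : s * f s / n < |Φ s| := by
      rw [div_lt_iff₀ hn0]
      calc s * f s = (s * f s / |Φ s|) * |Φ s| := by field_simp
        _ < n * |Φ s| := mul_lt_mul_of_pos_right hn hc
        _ = |Φ s| * n := mul_comm _ _
    linarith [key n hn1]
  have : Φ s = 0 := abs_eq_zero.mp (le_antisymm habs (abs_nonneg _))
  simp only [hΦ] at this
  linarith

/-- Equivalence of (H2) and (H2') for a vorticity function `f` satisfying (H1)
with `f(s) → ∞` as `s → ∞`.  Here `f0` denotes `f(0⁺)`, `finv` is the inverse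
of the restriction of `f` to `[0,∞)` extended by `0` on `(-∞, f(0⁺)]`, and
`F_*(s) = ∫₀^s finv(r) dr`. -/
theorem stmt0 (f finv : ℝ → ℝ) (f0 : ℝ)
    (hf_cont : ContinuousOn f ({(0:ℝ)}ᶜ))
    (hf_neg : ∀ s ≤ (0:ℝ), f s = 0)
    (hf_mono : StrictMonoOn f (Ici (0:ℝ)))
    (hf0 : Tendsto f (nhdsWithin 0 (Ioi 0)) (nhds f0))
    (hf0_nonneg : 0 ≤ f0)
    (hf_inf : Tendsto f atTop atTop)
    (hfinv_zero : ∀ s ≤ f0, finv s = 0)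
    (hfinv_left : ∀ s ≥ (0:ℝ), finv (f s) = s)
    (hfinv_right : ∀ t ≥ f0, f (finv t) = t) :
    (∃ θ₀ ∈ Ioo (0:ℝ) 1, ∀ s ≥ (0:ℝ),
        (∫ r in (0:ℝ)..s, (f r - f0)) ≤ θ₀ * (f s - f0) * s) ↔
    (∃ θ₁ ∈ Ioo (0:ℝ) 1, ∀ s ≥ (0:ℝ),
        (∫ r in (0:ℝ)..s, finv r) ≥ θ₁ * s * finv s) := by
  have hf00 : f 0 = 0 := hf_neg 0 le_rfl
  have hf0z : f0 = 0 := by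
    have h1 := hfinv_right f0 le_rfl
    rw [hfinv_zero f0 le_rfl, hf00] at h1
    exact h1.symm
  subst hf0z
  have hfi0 : finv 0 = 0 := hfinv_zero 0 le_rfl
  have hfmono : Monotone f := by
    intro x y hxy
    rcases le_or_gt x 0 with hx | hx
    · rw [hf_neg x hx]
      rcases le_or_gt y 0 with hy | hy
      · rw [hf_neg y hy]
      · calc (0:ℝ) = f 0 := hf00.symm
          _ ≤ f y := hf_mono.monotoneOn (mem_Ici.2 le_rfl) (mem_Ici.2 hy.le) hy.le
    · exact hf_mono.monotoneOn (mem_Ici.2 hx.le) (mem_Ici.2 (hx.le.trans hxy)) hxy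
  have hfinv_nonneg : ∀ t ≥ (0:ℝ), 0 ≤ finv t := by
    intro t ht
    by_contra h
    push_neg at h
    have h1 := hfinv_right t ht
    rw [hf_neg _ h.le] at h1
    rw [← h1, hfi0] at h
    exact lt_irrefl 0 h
  have hfimono : Monotone finv := by
    intro x y hxy
    rcases le_or_gt x 0 with hx | hx
    · rw [hfinv_zero x hx]
      rcases le_or_gt y 0 with hy | hy
      · rw [hfinv_zero y hy]
      · exact hfinv_nonneg y hy.le
    · by_contra h
      push_neg at h
      have h1 : f (finv y) < f (finv x) :=
        hf_mono (mem_Ici.2 (hfinv_nonneg y (hx.le.trans hxy)))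
          (mem_Ici.2 (hfinv_nonneg x hx.le)) h
      rw [hfinv_right x hx.le, hfinv_right y (hx.le.trans hxy)] at h1
      linarith
  simp only [sub_zero]
  have hkey : ∀ s ≥ (0:ℝ), (∫ r in (0:ℝ)..(f s), finv r) = s * f s - ∫ r in (0:ℝ)..s, f r :=
    fun s hs => young_eq f finv hfmono hfimono hf00 hfinv_left s hs
  constructor
  · rintro ⟨θ, ⟨hθ0, hθ1⟩, h⟩
    refine ⟨1 - θ, ⟨by linarith, by linarith⟩, fun t ht => ?_⟩
    have hs : 0 ≤ finv t := hfinv_nonneg t ht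
    have hft : f (finv t) = t := hfinv_right t ht
    have h1 := hkey (finv t) hs
    rw [hft] at h1
    have h2 := h (finv t) hs
    rw [hft] at h2
    rw [ge_iff_le, h1]
    nlinarith [h2]
  · rintro ⟨θ, ⟨hθ0, hθ1⟩, h⟩
    refine ⟨1 - θ, ⟨by linarith, by linarith⟩, fun s hs => ?_⟩
    have hfs : (0:ℝ) ≤ f s := hf00 ▸ hfmono hs
    have h2 := h (f s) hfs
    rw [hfinv_left s hs] at h2
    have h1 := hkey s hs
    nlinarith [h1, h2]
end
end

section
/- Let D ⊂ ℝ² be a bounded measurable set and W ∈ L¹(D×D). If (ζ_j) is a sequence in L∞(D) with sup_j ‖ζ_j‖_{L∞} < ∞ which converges to ζ in the weak-* topology of L∞(D) (as the dual of L¹(D)), then ∬_{D×D} W(x,y)·ζ_j(x)·ζ_j(y) dm(x) dm(y) → ∬_{D×D} W(x,y)·ζ(x)·ζ(y) dm(x) dm(y) as j → ∞. -/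
/-!
Write `K f x = ∫ W(x,y) f(y) dy`. Since `W(x,·) ∈ L¹` for a.e. `x`, weak-* convergence gives
`K ζ_j → K ζ` pointwise a.e., and `|K ζ_j x| ≤ M ∫ |W(x,y)| dy` is an `L¹` majorant, so
`K ζ_j → K ζ` in `L¹` by dominated convergence. Then in
`∬ W ζ_j ⊗ ζ_j = ∫ ζ_j (K ζ_j - K ζ) + ∫ ζ_j K ζ` the first term is at most
`M ‖K ζ_j - K ζ‖₁ → 0`, and the second tends to `∫ ζ K ζ` by weak-* convergence tested against
`K ζ ∈ L¹`.
-/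

open MeasureTheory Metric Real Set Filter

noncomputable section

abbrev Pt : Type := EuclideanSpace ℝ (Fin 2)

namespace MeasureTheory

variable {α β : Type*} [MeasurableSpace β] {ν : Measure β}

def integralOperator (W : α → β → ℝ) (ν : Measure β) (f : β → ℝ) (x : α) : ℝ :=
  ∫ y, W x y * f y ∂ν

theorem abs_integralOperator_le {W : α → β → ℝ} {f : β → ℝ} {C : ℝ} {x : α}
    (hWx : Integrable (W x) ν) (hf : ∀ᵐ y ∂ν, |f y| ≤ C) :
    |integralOperator W ν f x| ≤ C * ∫ y, |W x y| ∂ν := by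
  rw [integralOperator, ← integral_const_mul C]
  refine norm_integral_le_of_norm_le (f := fun y => W x y * f y) (hWx.abs.const_mul C) ?_
  filter_upwards [hf] with y hy
  rw [norm_mul, mul_comm]
  exact mul_le_mul_of_nonneg_right hy (abs_nonneg _)

variable [MeasurableSpace α] {μ : Measure α}

theorem Integrable.integralOperator [SFinite ν] {W : α → β → ℝ} {f : β → ℝ} {C : ℝ}
    (hW : Integrable (fun p : α × β => W p.1 p.2) (μ.prod ν))
    (hfm : AEStronglyMeasurable f ν) (hf : ∀ᵐ y ∂ν, |f y| ≤ C) :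
    Integrable (integralOperator W ν f) μ := by
  have hprod : Integrable (fun p : α × β => W p.1 p.2 * f p.2) (μ.prod ν) := by
    simp_rw [mul_comm (W _ _)]
    exact hW.bdd_mul hfm.comp_snd (Measure.quasiMeasurePreserving_snd.ae hf)
  exact hprod.integral_prod_left

theorem tendsto_integral_abs_integralOperator_sub [SFinite μ] [SFinite ν] {ι : Type*}
    {l : Filter ι} [l.IsCountablyGenerated] {W : α → β → ℝ}
    (hW : Integrable (fun p : α × β => W p.1 p.2) (μ.prod ν))
    {f : ι → β → ℝ} {g : β → ℝ} (hfm : ∀ i, AEStronglyMeasurable (f i) ν)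
    (hgm : AEStronglyMeasurable g ν) {C C' : ℝ} (hf : ∀ i, ∀ᵐ y ∂ν, |f i y| ≤ C)
    (hg : ∀ᵐ y ∂ν, |g y| ≤ C')
    (hweak : ∀ h : β → ℝ, Integrable h ν →
      Tendsto (fun i => ∫ y, f i y * h y ∂ν) l (nhds (∫ y, g y * h y ∂ν))) :
    Tendsto (fun i => ∫ x, |integralOperator W ν (f i) x - integralOperator W ν g x| ∂μ) l
      (nhds 0) := by
  set K := integralOperator W ν
  have hslice : ∀ᵐ x ∂μ, Integrable (W x) ν := hW.prod_right_ae
  have hpointwise : ∀ᵐ x ∂μ, Tendsto (fun i => K (f i) x) l (nhds (K g x)) := by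
    filter_upwards [hslice] with x hx
    simpa only [K, integralOperator, mul_comm (W x _)] using hweak (W x) hx
  have hbound : ∀ i, ∀ᵐ x ∂μ, ‖|K (f i) x - K g x|‖ ≤ (C + C') * ∫ y, |W x y| ∂ν := by
    intro i
    filter_upwards [hslice] with x hx
    rw [norm_abs_eq_norm, add_mul]
    exact (abs_sub _ _).trans (add_le_add (abs_integralOperator_le hx (hf i))
      (abs_integralOperator_le hx hg))
  simpa using tendsto_integral_filter_of_dominated_convergence (l := l) (f := fun _ => 0) _
    (.of_forall fun i => ((hW.integralOperator (hfm i) (hf i)).sub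
      (hW.integralOperator hgm hg)).abs.aestronglyMeasurable)
    (.of_forall hbound) (hW.abs.integral_prod_left.const_mul _)
    (by filter_upwards [hpointwise] with x hx; simpa using (hx.sub_const (K g x)).abs)

theorem tendsto_integral_mul_integralOperator [SFinite μ] {ι : Type*} {l : Filter ι}
    [l.IsCountablyGenerated] {W : α → α → ℝ}
    (hW : Integrable (fun p : α × α => W p.1 p.2) (μ.prod μ))
    {f : ι → α → ℝ} {g : α → ℝ} (hfm : ∀ i, AEStronglyMeasurable (f i) μ)
    (hgm : AEStronglyMeasurable g μ) {C C' : ℝ} (hf : ∀ i, ∀ᵐ x ∂μ, |f i x| ≤ C)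
    (hg : ∀ᵐ x ∂μ, |g x| ≤ C')
    (hweak : ∀ h : α → ℝ, Integrable h μ →
      Tendsto (fun i => ∫ x, f i x * h x ∂μ) l (nhds (∫ x, g x * h x ∂μ))) :
    Tendsto (fun i => ∫ x, f i x * integralOperator W μ (f i) x ∂μ) l
      (nhds (∫ x, g x * integralOperator W μ g x ∂μ)) := by
  set K := integralOperator W μ
  have hKf : ∀ i, Integrable (K (f i)) μ := fun i => hW.integralOperator (hfm i) (hf i)
  have hKg : Integrable (K g) μ := hW.integralOperator hgm hg
  have hsplit : ∀ i, ∫ x, f i x * K (f i) x ∂μ =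
      ∫ x, f i x * (K (f i) x - K g x) ∂μ + ∫ x, f i x * K g x ∂μ := by
    intro i
    rw [← integral_add (f := fun x => f i x * (K (f i) x - K g x)) (g := fun x => f i x * K g x)
      (((hKf i).sub hKg).bdd_mul (hfm i) (hf i)) (hKg.bdd_mul (hfm i) (hf i))]
    simp only [mul_sub, sub_add_cancel]
  have hdefect : Tendsto (fun i => ∫ x, f i x * (K (f i) x - K g x) ∂μ) l (nhds 0) := by
    refine squeeze_zero_norm (fun i => ?_) (by
      simpa using (tendsto_integral_abs_integralOperator_sub hW hfm hgm hf hg hweak).const_mul C)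
    rw [← integral_const_mul]
    refine norm_integral_le_of_norm_le (((hKf i).sub hKg).abs.const_mul C) ?_
    filter_upwards [hf i] with x hx
    rw [norm_mul]
    exact mul_le_mul_of_nonneg_right hx (norm_nonneg _)
  simpa only [hsplit, zero_add] using hdefect.add (hweak (K g) hKg)

end MeasureTheory

theorem stmt2_general
    (D : Set Pt)
    (W : Pt → Pt → ℝ)
    (hW : Integrable (fun p : Pt × Pt => W p.1 p.2)
      ((volume.restrict D).prod (volume.restrict D)))
    (ζj : ℕ → Pt → ℝ) (ζ : Pt → ℝ)
    (hζjm : ∀ j, Measurable (ζj j)) (hζm : Measurable ζ)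
    (M : ℝ) (hbd : ∀ j, ∀ᵐ x ∂(volume.restrict D), |ζj j x| ≤ M)
    (M' : ℝ) (hζbd : ∀ᵐ x ∂(volume.restrict D), |ζ x| ≤ M')
    (hweak : ∀ h : Pt → ℝ, Integrable h (volume.restrict D) →
      Tendsto (fun j => ∫ x in D, ζj j x * h x) atTop (nhds (∫ x in D, ζ x * h x))) :
    Tendsto (fun j => ∫ x in D, ∫ y in D, W x y * ζj j x * ζj j y) atTop
      (nhds (∫ x in D, ∫ y in D, W x y * ζ x * ζ y)) := by
  have hquadratic : ∀ f : Pt → ℝ, ∫ x in D, ∫ y in D, W x y * f x * f y =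
      ∫ x in D, f x * integralOperator W (volume.restrict D) f x := by
    intro f
    simp only [integralOperator, ← integral_const_mul, mul_assoc, mul_left_comm (f _)]
  simpa only [hquadratic] using tendsto_integral_mul_integralOperator hW
    (fun j => (hζjm j).aestronglyMeasurable) hζm.aestronglyMeasurable hbd hζbd hweak

/-- Weak-* continuity of the quadratic form associated with a kernel
`W ∈ L¹(D×D)`: if `ζ_j` is uniformly bounded in `L∞(D)` and `ζ_j → ζ`
weakly-* in `L∞(D)` (as the dual of `L¹(D)`), then
`∬ W ζ_j ⊗ ζ_j → ∬ W ζ ⊗ ζ`. -/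
theorem stmt2
    (D : Set Pt) (hDbdd : Bornology.IsBounded D) (hDm : MeasurableSet D)
    (W : Pt → Pt → ℝ)
    (hW : Integrable (fun p : Pt × Pt => W p.1 p.2)
      ((volume.restrict D).prod (volume.restrict D)))
    (ζj : ℕ → Pt → ℝ) (ζ : Pt → ℝ)
    (hζjm : ∀ j, Measurable (ζj j)) (hζm : Measurable ζ)
    (M : ℝ) (hbd : ∀ j, ∀ᵐ x ∂(volume.restrict D), |ζj j x| ≤ M)
    (M' : ℝ) (hζbd : ∀ᵐ x ∂(volume.restrict D), |ζ x| ≤ M')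
    (hweak : ∀ h : Pt → ℝ, Integrable h (volume.restrict D) →
      Tendsto (fun j => ∫ x in D, ζj j x * h x) atTop (nhds (∫ x in D, ζ x * h x))) :
    Tendsto (fun j => ∫ x in D, ∫ y in D, W x y * ζj j x * ζj j y) atTop
      (nhds (∫ x in D, ∫ y in D, W x y * ζ x * ζ y)) :=
  stmt2_general D W hW ζj ζ hζjm hζm M hbd M' hζbd hweak
end
end

section
/- Suppose κ₀ > 0, ε ∈ (0,1), δ(ε) ∈ (0,1), Λ > f(0⁺)+1, and let ζ* ∈ A_{ε,Λ} and μ ∈ ℝ be such that, with ψ := Kζ* + q − μ, a.e. in D one has ζ* ≥ (δ(ε)/ε²)·f(ψ) on {ψ > 0} (this holds in particular for the maximizer of E over A_{ε,Λ} with its Lagrange multiplier μ). If moreover ‖R‖_{L∞(D×D)}·κ₀·δ(ε) ≤ 1 and (f(0⁺)+1)·ν(D) > κ₀·ε², then μ ≥ −f⁻¹(f(0⁺)+1) + min_{cl(D)} q − 1. -/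
open MeasureTheory Metric Real Set Filter

noncomputable section

/-- The operator `K` of the abstract lake-kernel setup:
`Kζ(x) = b(x)∫_D G(x,y)ζ(y) dν(y) + ∫_D R(x,y)ζ(y) dν(y)`, where `dν = b dm`. -/
def Kop (D : Set Pt) (b : Pt → ℝ) (G R : Pt → Pt → ℝ) (ζ : Pt → ℝ) (x : Pt) : ℝ :=
  b x * (∫ y in D, G x y * ζ y * b y) + ∫ y in D, R x y * ζ y * b y

/-- `F_*(s) = ∫₀^s f⁻¹(r) dr`. -/
def Fstar (finv : ℝ → ℝ) (s : ℝ) : ℝ := ∫ r in (0:ℝ)..s, finv r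

/-- The admissible class `A_{ε,Λ}`:
`0 ≤ ζ ≤ Λδ(ε)/ε²` a.e. in `D` and `∫_D ζ dν = κ₀ δ(ε)`. -/
def InA (D : Set Pt) (b : Pt → ℝ) (κ₀ ε δ Λ : ℝ) (ζ : Pt → ℝ) : Prop :=
  Measurable ζ ∧ (∀ᵐ x ∂(volume.restrict D), 0 ≤ ζ x ∧ ζ x ≤ Λ * δ / ε ^ 2) ∧
    (∫ x in D, ζ x * b x) = κ₀ * δ

/-- The energy functional
`E(ζ) = (1/2)∫_D ζ·Kζ dν + ∫_D qζ dν − (δ/ε²)∫_D F_*((ε²/δ)ζ) dν`. -/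
def Efun (D : Set Pt) (b q : Pt → ℝ) (G R : Pt → Pt → ℝ) (finv : ℝ → ℝ)
    (ε δ : ℝ) (ζ : Pt → ℝ) : ℝ :=
  (1/2) * (∫ x in D, ζ x * Kop D b G R ζ x * b x)
    + (∫ x in D, q x * ζ x * b x)
    - (δ / ε ^ 2) * ∫ x in D, Fstar finv ((ε ^ 2 / δ) * ζ x) * b x

/-!
If `μ` were below the bound, then on `D` the `G`-part of `Kζ*` is nonnegative and the `R`-part is
at least `-‖R‖_∞ κ₀ δ ≥ -1`, so `ψ = Kζ* + q - μ > f⁻¹(f(0⁺)+1)` a.e. in `D`. The profile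
inequality then gives `ζ* ≥ (δ/ε²)(f(0⁺)+1)` a.e., and integrating against `ν` yields
`κ₀ δ ≥ (δ/ε²)(f(0⁺)+1) ν(D)`, contradicting `(f(0⁺)+1) ν(D) > κ₀ ε²`.
-/

theorem neg_mul_integral_le_integral_mul {α : Type*} [MeasurableSpace α] {μ : Measure α}
    {k g : α → ℝ} {C : ℝ} (hk : ∀ y, |k y| ≤ C) (hg0 : 0 ≤ᵐ[μ] g) (hg : Integrable g μ) :
    -(C * ∫ y, g y ∂μ) ≤ ∫ y, k y * g y ∂μ := by
  have hnorm : ‖∫ y, k y * g y ∂μ‖ ≤ ∫ y, C * g y ∂μ := by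
    refine norm_integral_le_of_norm_le (hg.const_mul C) ?_
    filter_upwards [hg0] with y hy
    rw [norm_mul, Real.norm_of_nonneg hy, Real.norm_eq_abs]
    exact mul_le_mul_of_nonneg_right (hk y) hy
  rw [integral_const_mul, Real.norm_eq_abs] at hnorm
  exact neg_le_of_abs_le hnorm

theorem neg_mul_integral_le_Kop {D : Set Pt} (hD : MeasurableSet D) {b : Pt → ℝ}
    (hb : ∀ x ∈ D, 0 ≤ b x) {G R : Pt → Pt → ℝ}
    (hG : ∀ᵐ x ∂(volume.restrict D), ∀ᵐ y ∂(volume.restrict D), 0 ≤ G x y)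
    {CR : ℝ} (hR : ∀ x y, |R x y| ≤ CR) {ζ : Pt → ℝ} (hζ : ∀ᵐ y ∂(volume.restrict D), 0 ≤ ζ y)
    (hζb : Integrable (fun y => ζ y * b y) (volume.restrict D)) :
    ∀ᵐ x ∂(volume.restrict D), -(CR * ∫ y in D, ζ y * b y) ≤ Kop D b G R ζ x := by
  have hb_ae : ∀ᵐ y ∂(volume.restrict D), 0 ≤ b y := (ae_restrict_iff' hD).2 (ae_of_all _ hb)
  have hζb0 : 0 ≤ᵐ[volume.restrict D] fun y => ζ y * b y := by
    filter_upwards [hζ, hb_ae] with y hζy hby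
    exact mul_nonneg hζy hby
  filter_upwards [hG, ae_restrict_mem hD] with x hGx hx
  have hG_part : 0 ≤ b x * ∫ y in D, G x y * ζ y * b y := by
    refine mul_nonneg (hb x hx) (integral_nonneg_of_ae ?_)
    filter_upwards [hGx, hζ, hb_ae] with y hGy hζy hby
    exact mul_nonneg (mul_nonneg hGy hζy) hby
  have hR_part : -(CR * ∫ y in D, ζ y * b y) ≤ ∫ y in D, R x y * ζ y * b y := by
    simpa only [mul_assoc] using neg_mul_integral_le_integral_mul (hR x) hζb0 hζb
  unfold Kop
  linarith

theorem pos_and_lt_apply_of_inv_lt {f finv : ℝ → ℝ} (hfneg : ∀ s ≤ (0:ℝ), f s = 0)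
    (hfmono : StrictMonoOn f (Ici (0:ℝ))) {t s : ℝ} (ht : 0 < t) (hft : f (finv t) = t)
    (hs : finv t < s) : 0 < s ∧ t < f s := by
  have hinv : 0 ≤ finv t := by
    by_contra hneg
    rw [hfneg _ (not_le.1 hneg).le] at hft
    exact ht.ne hft
  have hs0 : 0 < s := hinv.trans_lt hs
  refine ⟨hs0, ?_⟩
  simpa only [hft] using hfmono (mem_Ici.2 hinv) (mem_Ici.2 hs0.le) hs

theorem stmt4_general
    -- the domain
    (D : Set Pt) (hDo : IsOpen D) (hDbdd : Bornology.IsBounded D)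
    -- the depth function
    (b : Pt → ℝ) (hbpos : ∀ x ∈ D, 0 < b x)
    -- the background stream function
    (q : Pt → ℝ) (hq : ContinuousOn q (closure D))
    -- the kernel G
    (G : Pt → Pt → ℝ)
    (hGbd : ∀ᵐ p ∂((volume.restrict D).prod (volume.restrict D)),
      0 ≤ G p.1 p.2 ∧ G p.1 p.2 ≤ (1 / (2 * π)) * log (diam D / dist p.1 p.2))
    -- the correction kernel R
    (R : Pt → Pt → ℝ) (CR : ℝ) (hCR : ∀ x y, |R x y| ≤ CR)
    -- the nonlinearity f satisfying (H1) with f → ∞ at ∞, and its inverse finv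
    (f : ℝ → ℝ) (f0 : ℝ)
    (hfneg : ∀ s ≤ (0:ℝ), f s = 0)
    (hfmono : StrictMonoOn f (Ici (0:ℝ)))
    (hf0n : 0 ≤ f0)
    (finv : ℝ → ℝ)
    (hfinvr : ∀ t ≥ f0, f (finv t) = t)
    -- the parameters
    (κ₀ ε δ Λ : ℝ) (hκ : 0 < κ₀) (hε : ε ∈ Ioo (0:ℝ) 1) (hδ : δ ∈ Ioo (0:ℝ) 1)
    -- ζ* and its multiplier μ
    (ζstar : Pt → ℝ) (hζstar : InA D b κ₀ ε δ Λ ζstar) (μ : ℝ)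
    (hprofile : ∀ᵐ x ∂(volume.restrict D),
      0 < Kop D b G R ζstar x + q x - μ →
        (δ / ε ^ 2) * f (Kop D b G R ζstar x + q x - μ) ≤ ζstar x)
    -- the smallness assumptions
    (hRsmall : CR * κ₀ * δ ≤ 1)
    (hvol : (f0 + 1) * (∫ x in D, b x) > κ₀ * ε ^ 2) :
    μ ≥ -finv (f0 + 1) + sInf (q '' closure D) - 1 := by
  by_contra! hμ
  obtain ⟨-, hζbd, hζint⟩ := hζstar
  have hε2 : 0 < ε ^ 2 := pow_pos hε.1 2
  have hD : MeasurableSet D := hDo.measurableSet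
  -- a Bochner integral that is nonzero can only be that of an integrable function
  have hζb : Integrable (fun x => ζstar x * b x) (volume.restrict D) :=
    .of_integral_ne_zero (by rw [hζint]; exact (mul_pos hκ hδ.1).ne')
  have hb_int : Integrable b (volume.restrict D) :=
    .of_integral_ne_zero fun h => by rw [h] at hvol; nlinarith
  have hq_min : ∀ x ∈ D, sInf (q '' closure D) ≤ q x := fun x hx =>
    csInf_le (hDbdd.isCompact_closure.image_of_continuousOn hq).bddBelow
      ⟨x, subset_closure hx, rfl⟩
  have hK := neg_mul_integral_le_Kop (G := G) hD (fun x hx => (hbpos x hx).le)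
    ((Measure.ae_ae_of_ae_prod hGbd).mono fun x hx => hx.mono fun y hy => hy.1) hCR
    (hζbd.mono fun x hx => hx.1) hζb
  rw [hζint, ← mul_assoc] at hK
  have hζ_low : ∀ᵐ x ∂(volume.restrict D), δ / ε ^ 2 * (f0 + 1) ≤ ζstar x := by
    filter_upwards [hK, hprofile, ae_restrict_mem hD] with x hKx hpx hx
    obtain ⟨hψ, hfψ⟩ := pos_and_lt_apply_of_inv_lt (s := Kop D b G R ζstar x + q x - μ)
      hfneg hfmono (by linarith) (hfinvr (f0 + 1) (by linarith)) (by linarith [hq_min x hx])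
    exact (mul_le_mul_of_nonneg_left hfψ.le (div_pos hδ.1 hε2).le).trans (hpx hψ)
  have hmass : ∫ x in D, δ / ε ^ 2 * (f0 + 1) * b x ≤ ∫ x in D, ζstar x * b x := by
    refine integral_mono_ae (hb_int.const_mul _) hζb ?_
    filter_upwards [hζ_low, ae_restrict_mem hD] with x hx hxD
    exact mul_le_mul_of_nonneg_right hx (hbpos x hxD).le
  rw [integral_const_mul, hζint] at hmass
  have hscale := mul_lt_mul_of_pos_left hvol (div_pos hδ.1 hε2)
  have hκδ : δ / ε ^ 2 * (κ₀ * ε ^ 2) = κ₀ * δ := by field_simp [hε.1.ne']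
  linarith

/-- Lower bound (2-5) for the Lagrange multiplier `μ`: if `ζ* ∈ A_{ε,Λ}` and
`ζ* ≥ (δ/ε²)·f(ψ)` a.e. on `{ψ > 0}` where `ψ := Kζ* + q − μ`, and moreover
`‖R‖_∞ κ₀ δ ≤ 1` and `(f(0⁺)+1)·ν(D) > κ₀ ε²`, then
`μ ≥ −f⁻¹(f(0⁺)+1) + min_{cl(D)} q − 1`. -/
theorem stmt4
    -- the domain
    (D : Set Pt) (hDo : IsOpen D) (hDne : D.Nonempty) (hDbdd : Bornology.IsBounded D)
    -- the depth function
    (b : Pt → ℝ) (hb : ContinuousOn b (closure D)) (hbpos : ∀ x ∈ D, 0 < b x)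
    -- the background stream function
    (q : Pt → ℝ) (hq : ContinuousOn q (closure D))
    -- the kernel G
    (G : Pt → Pt → ℝ) (hGm : Measurable (Function.uncurry G))
    (hGsymm : ∀ x y, G x y = G y x)
    (hGbd : ∀ᵐ p ∂((volume.restrict D).prod (volume.restrict D)),
      0 ≤ G p.1 p.2 ∧ G p.1 p.2 ≤ (1 / (2 * π)) * log (diam D / dist p.1 p.2))
    -- the correction kernel R
    (R : Pt → Pt → ℝ) (hRm : Measurable (Function.uncurry R))
    (hRsymm : ∀ x y, R x y = R y x) (CR : ℝ) (hCR : ∀ x y, |R x y| ≤ CR)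
    -- the nonlinearity f satisfying (H1) with f → ∞ at ∞, and its inverse finv
    (f : ℝ → ℝ) (f0 : ℝ)
    (hfc : ContinuousOn f ({(0:ℝ)}ᶜ)) (hfneg : ∀ s ≤ (0:ℝ), f s = 0)
    (hfmono : StrictMonoOn f (Ici (0:ℝ)))
    (hf0 : Tendsto f (nhdsWithin 0 (Ioi 0)) (nhds f0)) (hf0n : 0 ≤ f0)
    (hfinf : Tendsto f atTop atTop)
    (finv : ℝ → ℝ) (hfinv0 : ∀ s ≤ f0, finv s = 0)
    (hfinvl : ∀ s ≥ (0:ℝ), finv (f s) = s) (hfinvr : ∀ t ≥ f0, f (finv t) = t)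
    -- the parameters
    (κ₀ ε δ Λ : ℝ) (hκ : 0 < κ₀) (hε : ε ∈ Ioo (0:ℝ) 1) (hδ : δ ∈ Ioo (0:ℝ) 1)
    (hΛ : Λ > f0 + 1)
    -- ζ* and its multiplier μ
    (ζstar : Pt → ℝ) (hζstar : InA D b κ₀ ε δ Λ ζstar) (μ : ℝ)
    (hprofile : ∀ᵐ x ∂(volume.restrict D),
      0 < Kop D b G R ζstar x + q x - μ →
        (δ / ε ^ 2) * f (Kop D b G R ζstar x + q x - μ) ≤ ζstar x)
    -- the smallness assumptions
    (hRsmall : CR * κ₀ * δ ≤ 1)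
    (hvol : (f0 + 1) * (∫ x in D, b x) > κ₀ * ε ^ 2) :
    μ ≥ -finv (f0 + 1) + sInf (q '' closure D) - 1 :=
  stmt4_general D hDo hDbdd b hbpos q hq G hGbd R CR hCR f f0 hfneg hfmono hf0n finv hfinvr κ₀ ε δ Λ
    hκ hε hδ ζstar hζstar μ hprofile hRsmall hvol
end
end
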